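/- Let (R, m) be a local Artinian ring, I a nonzero proper ideal of R, and a, b ∈ R. Then the ring R(I)_{a,b} is not Gorenstein. -/

import Mathlib

open IsLocalRing

universe u

/-! ### The family of rings `R(I)_{a,b}`

`RIab R I a b` is the quotient of the Rees algebra `⊕ₙ Iⁿtⁿ` by the contraction of the
ideal generated by `t² + a t + b`.  As an `R`-module it is `R ⊕ I`; we realize it as the
type of pairs `r + i t` with `r ∈ R`, `i ∈ I`, with multiplication
`(r + i t)(s + j t) = (r s - b i j) + (r j + s i - a i j) t`. -/
@[ext]
structure RIab (R : Type u) [CommRing R] (I : Ideal R) (a b : R) : Type u where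
  r : R
  i : R
  hi : i ∈ I

namespace RIab

variable {R : Type u} [CommRing R] {I : Ideal R} {a b : R}

instance : Zero (RIab R I a b) := ⟨⟨0, 0, I.zero_mem⟩⟩
instance : One (RIab R I a b) := ⟨⟨1, 0, I.zero_mem⟩⟩
instance : Add (RIab R I a b) := ⟨fun x y => ⟨x.r + y.r, x.i + y.i, I.add_mem x.hi y.hi⟩⟩
instance : Neg (RIab R I a b) := ⟨fun x => ⟨-x.r, -x.i, I.neg_mem x.hi⟩⟩
instance : Mul (RIab R I a b) :=
  ⟨fun x y => ⟨x.r * y.r - b * (x.i * y.i),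
    x.r * y.i + y.r * x.i - a * (x.i * y.i),
    I.sub_mem (I.add_mem (I.mul_mem_left _ y.hi) (I.mul_mem_left _ x.hi))
      (I.mul_mem_left _ (I.mul_mem_left _ y.hi))⟩⟩

@[simp] lemma zero_r : (0 : RIab R I a b).r = 0 := rfl
@[simp] lemma zero_i : (0 : RIab R I a b).i = 0 := rfl
@[simp] lemma one_r : (1 : RIab R I a b).r = 1 := rfl
@[simp] lemma one_i : (1 : RIab R I a b).i = 0 := rfl
@[simp] lemma add_r (x y : RIab R I a b) : (x + y).r = x.r + y.r := rfl
@[simp] lemma add_i (x y : RIab R I a b) : (x + y).i = x.i + y.i := rfl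
@[simp] lemma neg_r (x : RIab R I a b) : (-x).r = -x.r := rfl
@[simp] lemma neg_i (x : RIab R I a b) : (-x).i = -x.i := rfl
@[simp] lemma mul_r (x y : RIab R I a b) : (x * y).r = x.r * y.r - b * (x.i * y.i) := rfl
@[simp] lemma mul_i (x y : RIab R I a b) :
    (x * y).i = x.r * y.i + y.r * x.i - a * (x.i * y.i) := rfl

instance instCommRing : CommRing (RIab R I a b) where
  add_assoc x y z := by ext <;> simp <;> ring
  zero_add x := by ext <;> simp
  add_zero x := by ext <;> simp
  add_comm x y := by ext <;> simp <;> ring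
  neg_add_cancel x := by ext <;> simp
  mul_assoc x y z := by ext <;> simp <;> ring
  one_mul x := by ext <;> simp
  mul_one x := by ext <;> simp
  left_distrib x y z := by ext <;> simp <;> ring
  right_distrib x y z := by ext <;> simp <;> ring
  zero_mul x := by ext <;> simp
  mul_zero x := by ext <;> simp
  mul_comm x y := by ext <;> simp <;> ring
  nsmul := nsmulRec
  zsmul := zsmulRec

/-- The canonical ring homomorphism `R → R(I)_{a,b}`, `r ↦ r + 0·t`. -/
def C : R →+* RIab R I a b where
  toFun r := ⟨r, 0, I.zero_mem⟩
  map_one' := rfl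
  map_mul' x y := by ext <;> simp
  map_zero' := rfl
  map_add' x y := by ext <;> simp

instance instAlgebra : Algebra R (RIab R I a b) := (C (I := I) (a := a) (b := b)).toAlgebra

@[simp] lemma algebraMap_r (c : R) : (algebraMap R (RIab R I a b) c).r = c := rfl
@[simp] lemma algebraMap_i (c : R) : (algebraMap R (RIab R I a b) c).i = 0 := rfl

instance [Nontrivial R] : Nontrivial (RIab R I a b) :=
  ⟨⟨0, 1, fun h => zero_ne_one (congrArg RIab.r h)⟩⟩

variable [IsLocalRing R]

lemma isUnit_of_isUnit_r (hI : I ≠ ⊤) {x : RIab R I a b} (hx : IsUnit x.r) : IsUnit x := by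
  have hiI : x.i ∈ maximalIdeal R := le_maximalIdeal hI x.hi
  have hdet : IsUnit (x.r * x.r - a * x.r * x.i + b * (x.i * x.i)) := by
    by_contra h
    have hmem : x.r * x.r - a * x.r * x.i + b * (x.i * x.i) ∈ maximalIdeal R := by
      rwa [IsLocalRing.mem_maximalIdeal, mem_nonunits_iff]
    have : x.r * x.r ∈ maximalIdeal R := by
      have := (maximalIdeal R).add_mem hmem
        ((maximalIdeal R).sub_mem
          ((maximalIdeal R).mul_mem_left (a * x.r) hiI)
          ((maximalIdeal R).mul_mem_left (b * x.i) hiI))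
      have h2 : x.r * x.r - a * x.r * x.i + b * (x.i * x.i) +
          (a * x.r * x.i - b * x.i * x.i) = x.r * x.r := by ring
      rwa [h2] at this
    exact (IsLocalRing.mem_maximalIdeal _).mp this (hx.mul hx)
  obtain ⟨v, hv⟩ := hdet.exists_left_inv
  refine IsUnit.of_mul_eq_one (a := x) ⟨v * (x.r - a * x.i), v * (-x.i),
    I.mul_mem_left _ (I.neg_mem x.hi)⟩ ?_
  ext
  · show x.r * (v * (x.r - a * x.i)) - b * (x.i * (v * (-x.i))) = 1
    linear_combination hv
  · show x.r * (v * (-x.i)) + v * (x.r - a * x.i) * x.i - a * (x.i * (v * (-x.i))) = 0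
    ring

instance instIsLocalRing [Fact (I ≠ ⊤)] : IsLocalRing (RIab R I a b) := by
  refine IsLocalRing.of_isUnit_or_isUnit_one_sub_self fun x => ?_
  by_cases hx : IsUnit x.r
  · exact Or.inl (isUnit_of_isUnit_r Fact.out hx)
  · refine Or.inr (isUnit_of_isUnit_r Fact.out ?_)
    have hxm : x.r ∈ maximalIdeal R := by rwa [IsLocalRing.mem_maximalIdeal, mem_nonunits_iff]
    show IsUnit (1 - x).r
    have : (1 - x).r = 1 - x.r := by
      show (1 + -x).r = 1 - x.r
      simp; ring
    rw [this]
    by_contra h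
    have : (1 : R) ∈ maximalIdeal R := by
      have h1 : 1 - x.r ∈ maximalIdeal R := by
        rwa [IsLocalRing.mem_maximalIdeal, mem_nonunits_iff]
      have := (maximalIdeal R).add_mem h1 hxm
      simpa using this
    exact (maximalIdeal.isMaximal R).ne_top ((Ideal.eq_top_iff_one _).mpr this)

lemma mem_maximalIdeal_iff [Fact (I ≠ ⊤)] (x : RIab R I a b) :
    x ∈ maximalIdeal (RIab R I a b) ↔ x.r ∈ maximalIdeal R := by
  constructor
  · intro hx
    rw [IsLocalRing.mem_maximalIdeal, mem_nonunits_iff] at hx ⊢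
    intro hr
    exact hx (isUnit_of_isUnit_r Fact.out hr)
  · intro hx
    rw [IsLocalRing.mem_maximalIdeal, mem_nonunits_iff] at hx ⊢
    intro hu
    obtain ⟨y, hy⟩ := hu.exists_right_inv
    refine hx ?_
    have h1 : x.r * y.r - b * (x.i * y.i) = 1 := congrArg RIab.r hy
    have hIm : x.i * y.i ∈ maximalIdeal R :=
      le_maximalIdeal Fact.out (I.mul_mem_right _ x.hi)
    by_contra h
    have hxm : x.r ∈ maximalIdeal R := by rwa [IsLocalRing.mem_maximalIdeal, mem_nonunits_iff]
    have : (1 : R) ∈ maximalIdeal R := by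
      rw [← h1]
      exact (maximalIdeal R).sub_mem ((maximalIdeal R).mul_mem_right _ hxm)
        ((maximalIdeal R).mul_mem_left _ hIm)
    exact (maximalIdeal.isMaximal R).ne_top ((Ideal.eq_top_iff_one _).mpr this)

lemma algebraMap_mem_nonZeroDivisors {u : R} (hu : u ∈ nonZeroDivisors R) :
    algebraMap R (RIab R I a b) u ∈ nonZeroDivisors (RIab R I a b) := by
  rw [mem_nonZeroDivisors_iff_right]
  intro x hx
  have h1 : x.r * u - b * (x.i * 0) = 0 := congrArg RIab.r hx
  have h2 : x.r * 0 + u * x.i - a * (x.i * 0) = 0 := congrArg RIab.i hx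
  simp only [mul_zero, sub_zero, zero_add] at h1 h2
  rw [mul_comm] at h2
  ext
  · exact (mem_nonZeroDivisors_iff_right.mp hu) _ h1
  · exact (mem_nonZeroDivisors_iff_right.mp hu) _ h2

/-- The induced homomorphism between total quotient rings `Q(R) → Q(R(I)_{a,b})`. -/
noncomputable def mapFrac (I : Ideal R) (a b : R) :
    FractionRing R →+* FractionRing (RIab R I a b) :=
  IsLocalization.map (T := nonZeroDivisors (RIab R I a b)) _
    (algebraMap R (RIab R I a b)) (fun _ hu => algebraMap_mem_nonZeroDivisors hu)

/-- The element `t ∈ Q(R(I)_{a,b})`, realized as `(0 + i₀ t)/i₀` for a regular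
element `i₀ ∈ I`. -/
noncomputable def tau (I : Ideal R) (a b : R) (i₀ : R) (h : i₀ ∈ I)
    (hreg : i₀ ∈ nonZeroDivisors R) : FractionRing (RIab R I a b) :=
  IsLocalization.mk' _ (⟨0, i₀, h⟩ : RIab R I a b)
    (⟨algebraMap R (RIab R I a b) i₀, algebraMap_mem_nonZeroDivisors hreg⟩ :
      nonZeroDivisors (RIab R I a b))

end RIab

/-! ### Commutative-algebra notions used in the paper -/

instance (priority := 10) factMaximalIdealNeTop (R : Type u) [CommRing R] [IsLocalRing R] :
    Fact (maximalIdeal R ≠ ⊤) := ⟨(maximalIdeal.isMaximal R).ne_top⟩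

instance quotientIsLocalRing (R : Type u) [CommRing R] [IsLocalRing R] (I : Ideal R)
    [hI : Fact (I ≠ ⊤)] : IsLocalRing (R ⧸ I) :=
  have : Nontrivial (R ⧸ I) := Ideal.Quotient.nontrivial_iff.mpr hI.out
  IsLocalRing.of_surjective' (Ideal.Quotient.mk I) Ideal.Quotient.mk_surjective

section CA

variable (R : Type u) [CommRing R]

/-- The length `λ_R(M)` of an `R`-module, as the Krull dimension of its submodule lattice. -/
noncomputable def modLength (M : Type*) [AddCommGroup M] [Module R M] : ℕ∞ :=
  WithBot.unbotD 0 (Order.krullDim (Submodule R M))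

/-- `λ_R(A / B)` (more precisely `λ_R(A/(A ∩ B))`) for submodules `A B` of a module. -/
noncomputable def subquotLength {M : Type*} [AddCommGroup M] [Module R M]
    (A B : Submodule R M) : ℕ∞ :=
  modLength R (↥A ⧸ (Submodule.comap A.subtype B))

/-- The depth of a module over a local ring: the supremum of the lengths of (weakly)
regular sequences contained in the maximal ideal. -/
noncomputable def moduleDepth [IsLocalRing R] (M : Type*) [AddCommGroup M] [Module R M] : ℕ∞ :=
  sSup {n : ℕ∞ | ∃ rs : List R, (∀ x ∈ rs, x ∈ maximalIdeal R) ∧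
    RingTheory.Sequence.IsWeaklyRegular M rs ∧ (rs.length : ℕ∞) = n}

/-- A local ring is Cohen-Macaulay if its depth equals its Krull dimension. -/
def IsCohenMacaulayLocalRing [IsLocalRing R] : Prop :=
  (moduleDepth R R : WithBot ℕ∞) = ringKrullDim R

/-- A maximal Cohen-Macaulay module: finitely generated with depth equal to `dim R`. -/
def IsMaximalCohenMacaulay [IsLocalRing R] (M : Type*) [AddCommGroup M] [Module R M] : Prop :=
  Module.Finite R M ∧ (moduleDepth R M : WithBot ℕ∞) = ringKrullDim R

/-- A Cohen-Macaulay module: finitely generated with depth equal to its dimension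
`dim (R / ann M)`. -/
def IsCohenMacaulayModule [IsLocalRing R] (M : Type*) [AddCommGroup M] [Module R M] : Prop :=
  Module.Finite R M ∧
    (moduleDepth R M : WithBot ℕ∞) = ringKrullDim (R ⧸ Module.annihilator R M)

/-- The Krull dimension of a ring as a natural number. -/
noncomputable def krullDimNat : ℕ := ENat.toNat (WithBot.unbotD 0 (ringKrullDim R))

open CategoryTheory in
/-- `Ext^n_R(k, M)` where `k` is the residue field of the local ring `R`. -/
noncomputable def extResidue [IsLocalRing R] (M : Type u) [AddCommGroup M] [Module R M]
    (n : ℕ) : ModuleCat R :=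
  ((Ext R (ModuleCat.{u} R) n).obj
    (Opposite.op (ModuleCat.of R (ResidueField R)))).obj (ModuleCat.of R M)

/-- The Cohen-Macaulay type `t(R) = dim_k Ext^d_R(k, R)` of a local ring of dimension `d`. -/
noncomputable def CMtype [IsLocalRing R] : ℕ∞ :=
  modLength R (extResidue R R (krullDimNat R))

/-- A canonical module of a local ring: a finitely generated module `W` with
`dim_k Ext^i_R(k, W) = δ_{i, dim R}`. -/
def IsCanonicalModule [IsLocalRing R] (W : Type u) [AddCommGroup W] [Module R W] : Prop :=
  Module.Finite R W ∧ ∀ n : ℕ,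
    modLength R (extResidue R W n) = if n = krullDimNat R then 1 else 0

/-- A Gorenstein local ring: Cohen-Macaulay of type one. -/
def IsGorensteinLocalRing [IsLocalRing R] : Prop :=
  IsCohenMacaulayLocalRing R ∧ CMtype R = 1

/-- A regular local ring: Noetherian and the maximal ideal is generated by `dim R`
elements. -/
def IsRegularLocalRing' [IsLocalRing R] : Prop :=
  IsNoetherianRing R ∧ ∃ s : Finset R,
    Ideal.span (s : Set R) = maximalIdeal R ∧ (s.card : WithBot ℕ∞) = ringKrullDim R

/-- A complete intersection: the completion is a regular local ring modulo an ideal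
generated by a regular sequence. -/
def IsCompleteIntersectionLocalRing [IsLocalRing R] : Prop :=
  ∃ (T : Type u) (_ : CommRing T) (_ : IsLocalRing T),
    IsRegularLocalRing' T ∧ ∃ rs : List T, RingTheory.Sequence.IsRegular T rs ∧
      Nonempty ((AdicCompletion (maximalIdeal R) R) ≃+* (T ⧸ Ideal.ofList rs))

/-- The colon `(A : B) = {q ∈ Q | qB ⊆ A}` of two `R`-submodules of an `R`-algebra `Q`. -/
def qcolon {Q : Type*} [CommRing Q] [Algebra R Q] (A B : Submodule R Q) : Submodule R Q where
  carrier := {q | ∀ x ∈ B, q * x ∈ A}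
  add_mem' := fun {p q} hp hq x hx => by
    rw [add_mul]; exact A.add_mem (hp x hx) (hq x hx)
  zero_mem' := fun x hx => by rw [zero_mul]; exact A.zero_mem
  smul_mem' := fun c q hq x hx => by
    rw [Algebra.smul_mul_assoc]; exact A.smul_mem c (hq x hx)

/-- The image of an ideal in the total ring of fractions, as an `R`-submodule. -/
noncomputable def idealToFrac (J : Ideal R) : Submodule R (FractionRing R) :=
  Submodule.map (Algebra.linearMap R (FractionRing R)) J

/-- `z R` is a (minimal, i.e. principal) reduction of the fractional ideal `H`:
`z ∈ H` and `H^{n+1} = z H^n` for some `n`. -/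
def IsPrincipalReduction {Q : Type*} [CommRing Q] [Algebra R Q] (z : Q)
    (H : Submodule R Q) : Prop :=
  z ∈ H ∧ ∃ n : ℕ, H ^ (n + 1) = Submodule.span R {z} * H ^ n

/-- A one-dimensional local Cohen-Macaulay ring is almost Gorenstein if it has a canonical
module which is a fractional ideal `ω` with `R ⊆ ω ⊆ (m : m)`. -/
def IsAlmostGorensteinOneDim (S : Type u) [CommRing S] [IsLocalRing S] : Prop :=
  ∃ W : Submodule S (FractionRing S), IsFractional (nonZeroDivisors S) W ∧
    IsCanonicalModule S ↥W ∧ (1 : FractionRing S) ∈ W ∧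
    W * (Submodule.map (Algebra.linearMap S (FractionRing S)) (maximalIdeal S)) ≤
      Submodule.map (Algebra.linearMap S (FractionRing S)) (maximalIdeal S)

open Filter in
/-- The Hilbert-Samuel multiplicity `e⁰_m(C)` of a module `C` over a local ring,
defined as `lim_t d! · λ(C/m^t C) / t^d` where `d = dim C`. -/
noncomputable def hsMultiplicity (S : Type u) [CommRing S] [IsLocalRing S]
    (C : Type*) [AddCommGroup C] [Module S C] : ℝ :=
  limUnder atTop (fun t : ℕ =>
    ((Nat.factorial (krullDimNat (S ⧸ Module.annihilator S C)) *
        (modLength S (C ⧸ ((maximalIdeal S ^ t) • (⊤ : Submodule S C)))).toNat : ℕ) : ℝ) /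
      (t : ℝ) ^ (krullDimNat (S ⧸ Module.annihilator S C)))

/-- The minimal number of generators `μ(C) = λ(C / m C)` of a module over a local ring. -/
noncomputable def muGen (S : Type u) [CommRing S] [IsLocalRing S]
    (C : Type*) [AddCommGroup C] [Module S C] : ℕ∞ :=
  modLength S (C ⧸ ((maximalIdeal S) • (⊤ : Submodule S C)))

/-- A Cohen-Macaulay local ring possessing a canonical module is almost Gorenstein if there
is an exact sequence `0 → S → ω_S → C → 0` with `μ(C) = e⁰_m(C)` (Goto-Takahashi-Taniguchi). -/
def IsAlmostGorensteinLocalRing (S : Type u) [CommRing S] [IsLocalRing S] : Prop :=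
  ∃ W : ModuleCat.{u} S, IsCanonicalModule S W ∧
    ∃ f : S →ₗ[S] W, Function.Injective f ∧
      ∃ m : ℕ, muGen S (W ⧸ LinearMap.range f) = m ∧
        (m : ℝ) = hsMultiplicity S (W ⧸ LinearMap.range f)

/-- The height of an ideal: the infimum of the heights of the primes containing it. -/
noncomputable def idealHeight (J : Ideal R) : ℕ∞ :=
  ⨅ (p : PrimeSpectrum R) (_ : J ≤ p.asIdeal), Order.height p

end CA

/-!
An Artinian local ring `S` has dimension zero, so its type is the length of
`Hom_S(k, S)`, i.e. of the socle of `S`. Since the maximal ideal is the only associated prime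
of `I`, there is `ε ∈ I`, `ε ≠ 0`, with `m ε = 0`. Then both `ε` and `ε t` lie in the socle of
`R(I)_{a,b}`, and `ε t` is not a multiple of `ε`: the `t`-coefficient of `(r + i t) ε` is
`i ε = 0`. So the type of `R(I)_{a,b}` is at least two.
-/

open CategoryTheory Limits

lemma modLength_eq_length (R : Type u) [CommRing R] (M : Type*) [AddCommGroup M] [Module R M] :
    modLength R M = Module.length R M := by
  rw [modLength, ← Module.coe_length, WithBot.unbotD_coe]

lemma two_le_length_of_notMem_span {R M : Type*} [Ring R] [AddCommGroup M] [Module R M]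
    {x y : M} (hx : x ≠ 0) (hy : y ∉ Submodule.span R {x}) : 2 ≤ Module.length R M := by
  set N := Submodule.span R {x}
  have : Nontrivial N := ⟨⟨⟨x, Submodule.mem_span_singleton_self x⟩, 0, by simpa using hx⟩⟩
  have : Nontrivial (M ⧸ N) :=
    ⟨⟨N.mkQ y, 0, by simpa [Submodule.Quotient.mk_eq_zero] using hy⟩⟩
  rw [Module.length_eq_add_of_exact N.subtype N.mkQ N.injective_subtype N.mkQ_surjective
    (LinearMap.exact_subtype_mkQ N)]
  calc (2 : ℕ∞) = 1 + 1 := one_add_one_eq_two.symm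
    _ ≤ _ := add_le_add (Order.one_le_iff_pos.mpr Module.length_pos)
      (Order.one_le_iff_pos.mpr Module.length_pos)

section Socle

variable {S : Type u} [CommRing S] [IsLocalRing S] {M : Type*} [AddCommGroup M] [Module S M]

def residueFieldToSpanSingleton (x : M) (hx : ∀ c ∈ maximalIdeal S, c • x = 0) :
    ResidueField S →ₗ[S] M :=
  Submodule.liftQ (maximalIdeal S) (LinearMap.toSpanSingleton S M x) hx

@[simp] lemma residueFieldToSpanSingleton_one (x : M) (hx : ∀ c ∈ maximalIdeal S, c • x = 0) :
    residueFieldToSpanSingleton x hx 1 = x :=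
  one_smul S x

lemma two_le_length_hom_residueField {x y : M} (hx : ∀ c ∈ maximalIdeal S, c • x = 0)
    (hy : ∀ c ∈ maximalIdeal S, c • y = 0) (hx0 : x ≠ 0) (hyx : y ∉ Submodule.span S {x}) :
    2 ≤ Module.length S (ResidueField S →ₗ[S] M) := by
  refine two_le_length_of_notMem_span (x := residueFieldToSpanSingleton x hx)
    (y := residueFieldToSpanSingleton y hy) (fun h => hx0 ?_) fun h => hyx ?_
  · simpa using LinearMap.congr_fun h 1
  · obtain ⟨u, hu⟩ := Submodule.mem_span_singleton.mp h
    exact Submodule.mem_span_singleton.mpr ⟨u, by simpa using LinearMap.congr_fun hu 1⟩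

end Socle

lemma exists_ne_zero_forall_mem_maximalIdeal_smul_eq_zero (R : Type*) [CommRing R]
    [IsLocalRing R] [IsArtinianRing R] (M : Type*) [AddCommGroup M] [Module R M] [Nontrivial M] :
    ∃ x : M, x ≠ 0 ∧ ∀ c ∈ maximalIdeal R, c • x = 0 := by
  obtain ⟨P, hP⟩ := associatedPrimes.nonempty R M
  obtain ⟨hPrime, x, hPx⟩ := isAssociatedPrime_iff.mp hP
  have hPm : P = maximalIdeal R := IsLocalRing.eq_maximalIdeal hPrime.isMaximal'
  refine ⟨x, fun hx0 => hPrime.ne_top ?_, fun c hc => ?_⟩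
  · simp [hPx, hx0]
  · rw [← hPm, hPx, Submodule.mem_colon_singleton] at hc
    simpa using hc

lemma krullDimNat_eq_zero_of_isArtinianRing (S : Type u) [CommRing S] [IsArtinianRing S] :
    krullDimNat S = 0 := by
  have h : ringKrullDim S ≤ 0 := Ring.krullDimLE_iff.mp inferInstance
  rw [krullDimNat]
  generalize ringKrullDim S = d at h
  induction d using WithBot.recBotCoe with
  | bot => rfl
  | coe n => simp_all

-- `linearYoneda` followed by the forgetful functor to abelian groups is `preadditiveYoneda`.
instance preservesFiniteLimits_linearYoneda_obj (S : Type u) [CommRing S]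
    (Y : ModuleCat.{u} S) : PreservesFiniteLimits ((linearYoneda S (ModuleCat.{u} S)).obj Y) :=
  have : PreservesLimits ((linearYoneda S (ModuleCat.{u} S)).obj Y ⋙
      forget₂ (ModuleCat.{u} S) AddCommGrpCat) :=
    preservesLimits_preadditiveYoneda_obj Y
  (preservesLimits_of_reflects_of_preserves _
    (forget₂ (ModuleCat.{u} S) AddCommGrpCat)).preservesFiniteLimits

instance preservesFiniteColimits_linearYoneda_obj_rightOp (S : Type u) [CommRing S]
    (Y : ModuleCat.{u} S) :
    PreservesFiniteColimits ((linearYoneda S (ModuleCat.{u} S)).obj Y).rightOp :=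
  preservesFiniteColimits_rightOp _

noncomputable def extZeroIso (S : Type u) [CommRing S] (X Y : ModuleCat.{u} S) :
    ((Ext S (ModuleCat.{u} S) 0).obj (Opposite.op X)).obj Y ≅ ModuleCat.of S (X ⟶ Y) :=
  (((linearYoneda S (ModuleCat.{u} S)).obj Y).rightOp.leftDerivedZeroIsoSelf.app X).unop.symm

lemma CMtype_eq_length_hom_residueField (S : Type u) [CommRing S] [IsLocalRing S]
    [IsArtinianRing S] : CMtype S = Module.length S (ResidueField S →ₗ[S] S) := by
  rw [CMtype, krullDimNat_eq_zero_of_isArtinianRing, modLength_eq_length]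
  exact ((extZeroIso S _ _).toLinearEquiv ≪≫ₗ ModuleCat.homLinearEquiv).length_eq

namespace RIab

variable {R : Type u} [CommRing R] {I : Ideal R} {a b : R}

@[simp] lemma smul_r (c : R) (x : RIab R I a b) : (c • x).r = c * x.r := by
  simp [Algebra.smul_def]

@[simp] lemma smul_i (c : R) (x : RIab R I a b) : (c • x).i = c * x.i := by
  simp [Algebra.smul_def]

def toProd : RIab R I a b →ₗ[R] R × R where
  toFun x := (x.r, x.i)
  map_add' _ _ := rfl
  map_smul' c x := by ext <;> simp

lemma toProd_injective : Function.Injective (toProd : RIab R I a b →ₗ[R] R × R) :=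
  fun _ _ h => RIab.ext (congrArg Prod.fst h) (congrArg Prod.snd h)

instance instIsArtinianRing [IsArtinianRing R] : IsArtinianRing (RIab R I a b) :=
  have : IsArtinian R (RIab R I a b) := isArtinian_of_injective toProd toProd_injective
  isArtinian_of_tower R this

variable [IsLocalRing R] [Fact (I ≠ ⊤)] {ε : R} (hε : ∀ c ∈ maximalIdeal R, c * ε = 0)
include hε

lemma mul_algebraMap_eq_zero {y : RIab R I a b} (hy : y ∈ maximalIdeal (RIab R I a b)) :
    y * algebraMap R _ ε = 0 := by
  have hyr := hε _ ((mem_maximalIdeal_iff y).mp hy)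
  have hyi := hε _ (le_maximalIdeal Fact.out y.hi)
  ext <;> simp [hyr, hyi, mul_comm ε]

lemma mul_mk_eq_zero (hεI : ε ∈ I) {y : RIab R I a b} (hy : y ∈ maximalIdeal (RIab R I a b)) :
    y * ⟨0, ε, hεI⟩ = 0 := by
  have hyr := hε _ ((mem_maximalIdeal_iff y).mp hy)
  have hyi := hε _ (le_maximalIdeal Fact.out y.hi)
  ext <;> simp [hyr, hyi]

lemma mk_notMem_span_algebraMap (hεI : ε ∈ I) (hε0 : ε ≠ 0) :
    (⟨0, ε, hεI⟩ : RIab R I a b) ∉ Submodule.span (RIab R I a b) {algebraMap R _ ε} := by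
  intro h
  obtain ⟨u, hu⟩ := Submodule.mem_span_singleton.mp h
  have hui := congrArg RIab.i hu
  simp [hε _ (le_maximalIdeal Fact.out u.hi), mul_comm ε] at hui
  exact hε0 hui.symm

end RIab

/-- Theorem 1.6.  If `(R, m)` is a local Artinian ring and `I` a nonzero
proper ideal, then `R(I)_{a,b}` is not Gorenstein. -/
theorem stmt4 (R : Type u) [CommRing R] [IsLocalRing R] [IsArtinianRing R]
    (I : Ideal R) (hI0 : I ≠ ⊥) [Fact (I ≠ ⊤)] (a b : R) :
    ¬ IsGorensteinLocalRing (RIab R I a b) := by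
  rintro ⟨-, htype⟩
  have : Nontrivial I := Submodule.nontrivial_iff_ne_bot.mpr hI0
  obtain ⟨⟨ε, hεI⟩, hε0, hεm⟩ := exists_ne_zero_forall_mem_maximalIdeal_smul_eq_zero R I
  have hε : ∀ c ∈ maximalIdeal R, c * ε = 0 := fun c hc => congrArg Subtype.val (hεm c hc)
  replace hε0 : ε ≠ 0 := fun h => hε0 (Subtype.ext h)
  have htype_ge : 2 ≤ CMtype (RIab R I a b) := by
    rw [CMtype_eq_length_hom_residueField]
    exact two_le_length_hom_residueField (fun _ => RIab.mul_algebraMap_eq_zero hε)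
      (fun _ => RIab.mul_mk_eq_zero hε hεI) (fun h => hε0 (congrArg RIab.r h))
      (RIab.mk_notMem_span_algebraMap hε hεI hε0)
  rw [htype] at htype_ge
  exact absurd htype_ge (by decide)
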